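/- For every integer m ≥ 1 and every domino tiling T of the Aztec diamond AD_m, the number of dominos of T of type I plus the number of dominos of T of type II equals m(m+1)/2. -/

import Mathlib

namespace Aztec

/-- A lattice square, identified by its lower-left corner. -/
abbrev Cell : Type := ℤ × ℤ

/-- The unit lattice square with lower-left corner `c` is contained in the
region `{(x, y) : |x| + |y| ≤ m + 1}`, i.e. lies in the Aztec diamond of rank `m`. -/
def inAD (m : ℕ) (c : Cell) : Prop :=
  max |c.1| |c.1 + 1| + max |c.2| |c.2 + 1| ≤ (m : ℤ) + 1

/-- A domino: either the horizontal `2×1` rectangle made of the lattice squares with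
lower-left corners `(a, b)` and `(a+1, b)`, or the vertical `1×2` rectangle made of the
lattice squares with lower-left corners `(a, b)` and `(a, b+1)`. -/
inductive Domino : Type where
  | horiz : ℤ → ℤ → Domino
  | vert : ℤ → ℤ → Domino
deriving DecidableEq

/-- The two lattice squares occupied by a domino. -/
def Domino.cells : Domino → Finset Cell
  | .horiz a b => {(a, b), (a + 1, b)}
  | .vert a b => {(a, b), (a, b + 1)}

/-- A domino tiling of the Aztec diamond of rank `m`: a set of dominos all of whose
squares lie in the Aztec diamond, such that every square of the Aztec diamond is covered
by exactly one domino. -/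
structure Tiling (m : ℕ) where
  dominos : Finset Domino
  inside : ∀ d ∈ dominos, ∀ c ∈ d.cells, inAD m c
  covers : ∀ c : Cell, inAD m c → ∃! d, d ∈ dominos ∧ c ∈ d.cells

/-- The square `[a,a+1] × [b,b+1]` is gray iff `a + b + m` is even. -/
def grayB (m : ℕ) (c : Cell) : Bool := (c.1 + c.2 + (m : ℤ)) % 2 == 0

/-- The square `[a,a+1] × [b,b+1]` is white iff `a + b + m` is odd. -/
def whiteB (m : ℕ) (c : Cell) : Bool := ! grayB m c

/-- A horizontal domino is of type I if its right square is gray. -/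
def isTypeI (m : ℕ) : Domino → Bool
  | .horiz a b => grayB m (a + 1, b)
  | .vert _ _ => false

/-- A vertical domino is of type II if its top square is gray. -/
def isTypeII (m : ℕ) : Domino → Bool
  | .vert a b => grayB m (a, b + 1)
  | .horiz _ _ => false

/-! ### Auxiliary material -/

/-- `vv a = max |a| |a+1|`, written without absolute values. -/
def vv (a : ℤ) : ℤ := if 0 ≤ a then a + 1 else -a

lemma max_abs_eq_vv (a : ℤ) : max |a| |a + 1| = vv a := by
  rcases le_or_gt 0 a with h | h
  · rw [vv, if_pos h, abs_of_nonneg h, abs_of_nonneg (by omega), max_eq_right (by omega)]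
  · rw [vv, if_neg (by omega), abs_of_neg h, abs_of_nonpos (by omega),
      max_eq_left (by omega)]

lemma one_le_vv (a : ℤ) : 1 ≤ vv a := by unfold vv; split <;> omega

lemma vv_cases (a : ℤ) : (0 ≤ a ∧ vv a = a + 1) ∨ (a < 0 ∧ vv a = -a) := by
  unfold vv; split
  · left; omega
  · right; constructor <;> omega

lemma vv_neg (a : ℤ) : vv (-1 - a) = vv a := by
  unfold vv; split <;> split <;> omega

lemma inAD_iff (m : ℕ) (a b : ℤ) : inAD m (a, b) ↔ vv a + vv b ≤ (m : ℤ) + 1 := by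
  rw [inAD]; simp only [max_abs_eq_vv]

instance (m : ℕ) : DecidablePred (inAD m) := fun c => by unfold inAD; infer_instance

/-- The Aztec diamond of rank `m` as a finite set of cells. -/
noncomputable def ADf (m : ℕ) : Finset Cell :=
  ((Finset.Icc (-(m : ℤ)) ((m : ℤ) - 1)) ×ˢ (Finset.Icc (-(m : ℤ)) ((m : ℤ) - 1))).filter
    (inAD m)

lemma mem_ADf {m : ℕ} {c : Cell} : c ∈ ADf m ↔ inAD m c := by
  obtain ⟨a, b⟩ := c
  constructor
  · intro h; exact (Finset.mem_filter.mp h).2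
  · intro h
    have h' := (inAD_iff m a b).mp h
    have h1 := one_le_vv a
    have h2 := one_le_vv b
    refine Finset.mem_filter.mpr ⟨?_, h⟩
    rw [Finset.mem_product, Finset.mem_Icc, Finset.mem_Icc]
    rcases vv_cases a with ⟨ha1, ha2⟩ | ⟨ha1, ha2⟩ <;>
      rcases vv_cases b with ⟨hb1, hb2⟩ | ⟨hb1, hb2⟩ <;> omega

/-- The weight of a cell. -/
def w (m : ℕ) (c : Cell) : ℤ := if grayB m c then c.1 + c.2 + 2 else -(c.1 + c.2)

lemma grayB_iff {m : ℕ} {a b : ℤ} : grayB m (a, b) = true ↔ (a + b + (m : ℤ)) % 2 = 0 := by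
  simp [grayB]

lemma grayB_false_iff {m : ℕ} {a b : ℤ} :
    grayB m (a, b) = false ↔ ¬ (a + b + (m : ℤ)) % 2 = 0 := by
  simp [grayB]

lemma sum_w_cells (m : ℕ) (d : Domino) :
    ∑ c ∈ d.cells, w m c =
      2 * (if isTypeI m d = true then 1 else 0) +
        2 * (if isTypeII m d = true then 1 else 0) + 1 := by
  rcases d with ⟨a, b⟩ | ⟨a, b⟩
  · have hne : ((a, b) : Cell) ≠ (a + 1, b) := by simp
    cases hg : grayB m (a, b) <;> cases hg2 : grayB m (a + 1, b)
    · rw [grayB_false_iff] at hg hg2; omega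
    · simp [Domino.cells, Finset.sum_pair hne, w, isTypeI, isTypeII, hg, hg2]; ring
    · simp [Domino.cells, Finset.sum_pair hne, w, isTypeI, isTypeII, hg, hg2]; ring
    · rw [grayB_iff] at hg hg2; omega
  · have hne : ((a, b) : Cell) ≠ (a, b + 1) := by simp
    cases hg : grayB m (a, b) <;> cases hg2 : grayB m (a, b + 1)
    · rw [grayB_false_iff] at hg hg2; omega
    · simp [Domino.cells, Finset.sum_pair hne, w, isTypeI, isTypeII, hg, hg2]; ring
    · simp [Domino.cells, Finset.sum_pair hne, w, isTypeI, isTypeII, hg, hg2]; ring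
    · rw [grayB_iff] at hg hg2; omega

lemma card_cells (d : Domino) : d.cells.card = 2 := by
  rcases d with ⟨a, b⟩ | ⟨a, b⟩
  · exact Finset.card_pair (by simp)
  · exact Finset.card_pair (by simp)

/-- The total weight of the Aztec diamond equals its cardinality. -/
lemma sum_w_ADf (m : ℕ) : ∑ c ∈ ADf m, w m c = ((ADf m).card : ℤ) := by
  have h0 : ∑ c ∈ ADf m, (w m c - 1) = 0 := by
    apply Finset.sum_involution (g := fun c _ => ((-1 - c.1, -1 - c.2) : Cell))
    · rintro ⟨a, b⟩ ha
      cases hg : grayB m (a, b) <;> cases hg2 : grayB m (-1 - a, -1 - b)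
      · simp [w, hg, hg2]; ring
      · rw [grayB_false_iff] at hg; rw [grayB_iff] at hg2; omega
      · rw [grayB_iff] at hg; rw [grayB_false_iff] at hg2; omega
      · simp [w, hg, hg2]; ring
    · rintro ⟨a, b⟩ ha h
      simp only [ne_eq, Prod.mk.injEq, not_and]
      intro h1; omega
    · rintro ⟨a, b⟩ ha
      rw [mem_ADf, inAD_iff] at ha ⊢
      rwa [vv_neg, vv_neg]
    · rintro ⟨a, b⟩ ha
      simp only [Prod.mk.injEq]
      constructor <;> ring
  have := Finset.sum_sub_distrib (s := ADf m) (f := w m) (g := fun _ => (1 : ℤ))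
  rw [h0] at this
  simp only [Finset.sum_const, nsmul_eq_mul, mul_one] at this
  omega

/-- Row `b` of the Aztec diamond. -/
noncomputable def row (m : ℕ) (b : ℤ) : Finset Cell :=
  (Finset.Icc (vv b - (m : ℤ) - 1) ((m : ℤ) - vv b)).map
    ⟨fun a => (a, b), fun x y h => (Prod.ext_iff.mp h).1⟩

lemma mem_row {m : ℕ} {b x y : ℤ} :
    (x, y) ∈ row m b ↔ y = b ∧ vv b - (m : ℤ) - 1 ≤ x ∧ x ≤ (m : ℤ) - vv b := by
  simp only [row, Finset.mem_map, Finset.mem_Icc, Function.Embedding.coeFn_mk, Prod.mk.injEq]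
  constructor
  · rintro ⟨a, ⟨h1, h2⟩, rfl, rfl⟩; exact ⟨rfl, h1, h2⟩
  · rintro ⟨rfl, h1, h2⟩; exact ⟨x, ⟨h1, h2⟩, rfl⟩

lemma ADf_eq_biUnion (m : ℕ) :
    ADf m = (Finset.Icc (-(m : ℤ)) ((m : ℤ) - 1)).biUnion (row m) := by
  ext ⟨a, b⟩
  rw [mem_ADf, inAD_iff, Finset.mem_biUnion]
  constructor
  · intro h
    have h1 := one_le_vv a
    have h2 := one_le_vv b
    refine ⟨b, ?_, ?_⟩
    · rw [Finset.mem_Icc]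
      rcases vv_cases a with ⟨ha1, ha2⟩ | ⟨ha1, ha2⟩ <;>
        rcases vv_cases b with ⟨hb1, hb2⟩ | ⟨hb1, hb2⟩ <;> omega
    · rw [mem_row]
      refine ⟨rfl, ?_, ?_⟩ <;>
        (rcases vv_cases a with ⟨ha1, ha2⟩ | ⟨ha1, ha2⟩ <;>
          rcases vv_cases b with ⟨hb1, hb2⟩ | ⟨hb1, hb2⟩ <;> omega)
  · rintro ⟨b', hb', hm⟩
    rw [mem_row] at hm
    obtain ⟨rfl, h1, h2⟩ := hm
    have h3 := one_le_vv a
    rcases vv_cases a with ⟨ha1, ha2⟩ | ⟨ha1, ha2⟩ <;> omega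

lemma vv_le_of_mem {m : ℕ} {b : ℤ} (hb : b ∈ Finset.Icc (-(m : ℤ)) ((m : ℤ) - 1)) :
    vv b ≤ (m : ℤ) := by
  rw [Finset.mem_Icc] at hb
  rcases vv_cases b with ⟨hb1, hb2⟩ | ⟨hb1, hb2⟩ <;> omega

lemma card_row (m : ℕ) (b : ℤ) : (row m b).card = (2 * ((m : ℤ) + 1 - vv b)).toNat := by
  rw [row, Finset.card_map, Int.card_Icc]
  congr 1; ring

lemma sum_rows (m : ℕ) :
    ∑ b ∈ Finset.Icc (-(m : ℤ)) ((m : ℤ) - 1), (2 * ((m : ℤ) + 1 - vv b)).toNat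
      = 2 * m * (m + 1) := by
  induction m with
  | zero =>
      have : Finset.Icc (-((0 : ℕ) : ℤ)) (((0 : ℕ) : ℤ) - 1) = ∅ := by
        apply Finset.Icc_eq_empty
        intro h
        simp only [Nat.cast_zero, neg_zero] at h
        omega
      rw [this]; simp
  | succ m ih =>
      have hset : Finset.Icc (-((m + 1 : ℕ) : ℤ)) (((m + 1 : ℕ) : ℤ) - 1) =
          insert (-((m : ℤ) + 1)) (insert (m : ℤ) (Finset.Icc (-(m : ℤ)) ((m : ℤ) - 1))) := by
        ext x
        simp only [Finset.mem_Icc, Finset.mem_insert]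
        push_cast; omega
      have hnot1 : (-((m : ℤ) + 1)) ∉ insert (m : ℤ) (Finset.Icc (-(m : ℤ)) ((m : ℤ) - 1)) := by
        simp only [Finset.mem_insert, Finset.mem_Icc]; omega
      have hnot2 : (m : ℤ) ∉ Finset.Icc (-(m : ℤ)) ((m : ℤ) - 1) := by
        simp only [Finset.mem_Icc]; omega
      rw [hset, Finset.sum_insert hnot1, Finset.sum_insert hnot2]
      have hv1 : vv (-((m : ℤ) + 1)) = (m : ℤ) + 1 := by
        rcases vv_cases (-((m : ℤ) + 1)) with ⟨h1, h2⟩ | ⟨h1, h2⟩ <;> omega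
      have hv2 : vv ((m : ℤ)) = (m : ℤ) + 1 := by
        rcases vv_cases ((m : ℤ)) with ⟨h1, h2⟩ | ⟨h1, h2⟩ <;> omega
      have hsum : ∑ b ∈ Finset.Icc (-(m : ℤ)) ((m : ℤ) - 1),
          (2 * (((m + 1 : ℕ) : ℤ) + 1 - vv b)).toNat
          = ∑ b ∈ Finset.Icc (-(m : ℤ)) ((m : ℤ) - 1),
              ((2 * ((m : ℤ) + 1 - vv b)).toNat + 2) := by
        apply Finset.sum_congr rfl
        intro b hb
        have h1 := one_le_vv b
        have h2 := vv_le_of_mem hb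
        push_cast
        omega
      rw [hsum, Finset.sum_add_distrib, ih, Finset.sum_const, Int.card_Icc]
      rw [hv1, hv2]
      push_cast
      have hc : (((m : ℤ) - 1 + 1 - -(m : ℤ))).toNat = 2 * m := by omega
      rw [hc]
      have : (2 * (((m : ℕ) : ℤ) + 1 + 1 - (((m : ℕ) : ℤ) + 1))).toNat = 2 := by omega
      rw [this]
      ring

lemma card_ADf (m : ℕ) : (ADf m).card = 2 * m * (m + 1) := by
  rw [ADf_eq_biUnion, Finset.card_biUnion]
  · rw [← sum_rows m]
    exact Finset.sum_congr rfl fun b _ => card_row m b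
  · intro x hx y hy hxy
    rw [Function.onFun, Finset.disjoint_left]
    intro c hcx hcy
    obtain ⟨cx, cy⟩ := c
    rw [mem_row] at hcx hcy
    exact hxy (hcx.1 ▸ hcy.1 ▸ rfl)

/-- In any domino tiling of the Aztec diamond of rank `m`, the number of dominos of
type I plus the number of dominos of type II equals `m(m+1)/2`. -/
theorem typeI_add_typeII_card (m : ℕ) (hm : 1 ≤ m) (T : Tiling m) :
    (T.dominos.filter fun d => isTypeI m d = true).card +
      (T.dominos.filter fun d => isTypeII m d = true).card = m * (m + 1) / 2 := by
  classical
  have hdisj : ∀ d ∈ T.dominos, ∀ d' ∈ T.dominos, d ≠ d' → Disjoint d.cells d'.cells := by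
    intro d hd d' hd' hne
    rw [Finset.disjoint_left]
    intro c hc hc'
    have hAD : inAD m c := T.inside d hd c hc
    obtain ⟨u, _, hu⟩ := T.covers c hAD
    exact hne ((hu d ⟨hd, hc⟩).trans (hu d' ⟨hd', hc'⟩).symm)
  have hpart : T.dominos.biUnion Domino.cells = ADf m := by
    ext c
    rw [Finset.mem_biUnion, mem_ADf]
    constructor
    · rintro ⟨d, hd, hc⟩; exact T.inside d hd c hc
    · intro h
      obtain ⟨d, ⟨hd, hc⟩, _⟩ := T.covers c h
      exact ⟨d, hd, hc⟩
  have hcard : (ADf m).card = 2 * T.dominos.card := by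
    rw [← hpart, Finset.card_biUnion hdisj]
    rw [Finset.sum_congr rfl fun d _ => card_cells d, Finset.sum_const, smul_eq_mul,
      mul_comm]
  have hsum : ∑ c ∈ ADf m, w m c = ∑ d ∈ T.dominos, ∑ c ∈ d.cells, w m c := by
    rw [← hpart, Finset.sum_biUnion]
    intro x hx y hy hxy
    exact hdisj x hx y hy hxy
  have hsum2 : ∑ d ∈ T.dominos, ∑ c ∈ d.cells, w m c =
      2 * ((T.dominos.filter fun d => isTypeI m d = true).card : ℤ) +
        2 * ((T.dominos.filter fun d => isTypeII m d = true).card : ℤ) +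
        (T.dominos.card : ℤ) := by
    rw [Finset.sum_congr rfl fun d _ => sum_w_cells m d]
    rw [Finset.sum_add_distrib, Finset.sum_add_distrib, ← Finset.mul_sum, ← Finset.mul_sum,
      Finset.sum_boole, Finset.sum_boole, Finset.sum_const, nsmul_eq_mul, mul_one]
  have hw := sum_w_ADf m
  have hAD : (ADf m).card = 2 * (m * (m + 1)) := by rw [card_ADf m]; ring
  rw [hsum, hsum2] at hw
  -- now conclude by arithmetic
  generalize hk : m * (m + 1) = k at hAD ⊢
  omega

end Aztec
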